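/- Let G be a connected finite simple graph with maximum degree Δ. Then G is regular (every vertex has degree Δ) if and only if A_Δ(G) = 1. -/

import Mathlib

open Polynomial Finset

/-- Number of neighbors of `v` inside the set `S` (denoted δ_S(v)). -/
def SimpleGraph.degIn {V : Type*} [Fintype V] [DecidableEq V]
    (G : SimpleGraph V) [DecidableRel G.Adj] (S : Finset V) (v : V) : ℕ :=
  (S.filter (fun u => G.Adj v u)).card

/-- Number of neighbors of `v` outside the set `S` (denoted δ_{S̄}(v)). -/
def SimpleGraph.degOut {V : Type*} [Fintype V] [DecidableEq V]
    (G : SimpleGraph V) [DecidableRel G.Adj] (S : Finset V) (v : V) : ℕ :=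
  (Sᶜ.filter (fun u => G.Adj v u)).card

/-- `S` is an exact defensive `k`-alliance in `G`: the induced subgraph `⟨S⟩` is connected
(in particular `S` is nonempty) and `k = k_S = min_{v ∈ S} (δ_S(v) - δ_{S̄}(v))`. -/
def SimpleGraph.IsExactAlliance {V : Type*} [Fintype V] [DecidableEq V]
    (G : SimpleGraph V) [DecidableRel G.Adj] (S : Finset V) (k : ℤ) : Prop :=
  (G.induce (S : Set V)).Connected ∧
    (∀ v ∈ S, k ≤ (G.degIn S v : ℤ) - (G.degOut S v : ℤ)) ∧
    (∃ v ∈ S, (G.degIn S v : ℤ) - (G.degOut S v : ℤ) = k)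

/-- `A_k(G)`: the number of exact defensive `k`-alliances in `G`. -/
noncomputable def SimpleGraph.allianceCoeff {V : Type*} [Fintype V] [DecidableEq V]
    (G : SimpleGraph V) [DecidableRel G.Adj] (k : ℤ) : ℕ :=
  Set.ncard {S : Finset V | G.IsExactAlliance S k}

/-- The alliance polynomial `A(G;x) = Σ_{k=-Δ}^{Δ} A_k(G) x^{n+k}`, where `n` is the order and
`Δ` the maximum degree of `G`, regarded as a real polynomial. -/
noncomputable def SimpleGraph.alliancePoly {V : Type*} [Fintype V] [DecidableEq V]
    (G : SimpleGraph V) [DecidableRel G.Adj] : Polynomial ℝ :=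
  ∑ k ∈ Finset.Icc (-(G.maxDegree : ℤ)) (G.maxDegree : ℤ),
    (G.allianceCoeff k : ℝ) • X ^ (((Fintype.card V : ℤ) + k).toNat)

/-!
Since `δ_S(v) + δ_{S̄}(v) = deg v ≤ Δ`, the inequality `δ_S(v) - δ_{S̄}(v) ≥ Δ` forces
`δ_{S̄}(v) = 0` and `deg v = Δ` for every `v ∈ S`. So an exact `Δ`-alliance is closed under
adjacency, hence is all of `V` when `G` is connected, and then every vertex has degree `Δ`.
Conversely, if `G` is `Δ`-regular then `V` itself is an exact `Δ`-alliance, and it is the only one.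
-/

namespace SimpleGraph

variable {V : Type*} [Fintype V] [DecidableEq V] (G : SimpleGraph V) [DecidableRel G.Adj]

theorem degIn_add_degOut (S : Finset V) (v : V) : G.degIn S v + G.degOut S v = G.degree v := by
  rw [degIn, degOut, ← card_union_of_disjoint (disjoint_filter_filter disjoint_compl_right),
    ← filter_union, union_compl, ← neighborFinset_eq_filter, card_neighborFinset_eq_degree]

theorem degIn_univ (v : V) : G.degIn univ v = G.degree v := by
  rw [degIn, ← neighborFinset_eq_filter, card_neighborFinset_eq_degree]

theorem degOut_univ (v : V) : G.degOut univ v = 0 := by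
  simp [degOut]

variable {G}

theorem degOut_eq_zero_iff {S : Finset V} {v : V} :
    G.degOut S v = 0 ↔ ∀ u, G.Adj v u → u ∈ S := by
  simp only [degOut, card_eq_zero, filter_eq_empty_iff, mem_compl]
  exact forall_congr' fun u => by tauto

theorem degOut_eq_zero_and_degree_eq_maxDegree_of_le {S : Finset V} {v : V}
    (h : (G.maxDegree : ℤ) ≤ (G.degIn S v : ℤ) - (G.degOut S v : ℤ)) :
    G.degOut S v = 0 ∧ G.degree v = G.maxDegree := by
  have hsum := G.degIn_add_degOut S v
  have hle := G.degree_le_maxDegree v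
  omega

theorem Connected.eq_univ_of_degOut_eq_zero (hconn : G.Connected) {S : Finset V}
    (hne : S.Nonempty) (hS : ∀ v ∈ S, G.degOut S v = 0) : S = univ := by
  obtain ⟨v₀, hv₀⟩ := hne
  refine eq_univ_of_forall fun u => ?_
  obtain ⟨p⟩ := hconn v₀ u
  induction p with
  | nil => exact hv₀
  | cons hadj _ ih => exact ih (degOut_eq_zero_iff.mp (hS _ hv₀) _ hadj)

theorem IsExactAlliance.nonempty {S : Finset V} {k : ℤ} (h : G.IsExactAlliance S k) :
    S.Nonempty := by
  obtain ⟨⟨v, hv⟩⟩ := h.1.nonempty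
  exact ⟨v, hv⟩

theorem IsExactAlliance.degOut_eq_zero_and_degree_eq_maxDegree {S : Finset V}
    (h : G.IsExactAlliance S G.maxDegree) {v : V} (hv : v ∈ S) :
    G.degOut S v = 0 ∧ G.degree v = G.maxDegree :=
  degOut_eq_zero_and_degree_eq_maxDegree_of_le (h.2.1 v hv)

theorem Connected.eq_univ_of_isExactAlliance_maxDegree (hconn : G.Connected) {S : Finset V}
    (h : G.IsExactAlliance S G.maxDegree) : S = univ :=
  hconn.eq_univ_of_degOut_eq_zero h.nonempty fun _ hv =>
    (h.degOut_eq_zero_and_degree_eq_maxDegree hv).1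

theorem Connected.isRegularOfDegree_maxDegree_of_isExactAlliance (hconn : G.Connected)
    {S : Finset V} (h : G.IsExactAlliance S G.maxDegree) : G.IsRegularOfDegree G.maxDegree := by
  obtain rfl := hconn.eq_univ_of_isExactAlliance_maxDegree h
  exact fun v => (h.degOut_eq_zero_and_degree_eq_maxDegree (mem_univ v)).2

theorem Connected.isExactAlliance_univ_of_isRegularOfDegree (hconn : G.Connected) {d : ℕ}
    (hreg : G.IsRegularOfDegree d) : G.IsExactAlliance univ d := by
  have hmargin : ∀ v, (G.degIn univ v : ℤ) - (G.degOut univ v : ℤ) = d := fun v => by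
    rw [degIn_univ, degOut_univ, hreg v]; simp
  obtain ⟨v⟩ := hconn.nonempty
  refine ⟨?_, fun v _ => (hmargin v).ge, v, mem_univ v, hmargin v⟩
  rw [coe_univ]
  exact G.induceUnivIso.connected_iff.mpr hconn

end SimpleGraph

open SimpleGraph in
/-- A connected graph `G` with maximum degree `Δ` is `Δ`-regular iff
`A_Δ(G) = 1`. -/
theorem regular_iff_allianceCoeff_maxDegree_eq_one
    {V : Type*} [Fintype V] [DecidableEq V]
    (G : SimpleGraph V) [DecidableRel G.Adj] (hconn : G.Connected) :
    G.IsRegularOfDegree G.maxDegree ↔ G.allianceCoeff (G.maxDegree : ℤ) = 1 := by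
  rw [allianceCoeff, Set.ncard_eq_one]
  constructor
  · intro hreg
    refine ⟨univ, Set.eq_singleton_iff_unique_mem.mpr ⟨?_, fun S hS => ?_⟩⟩
    · exact hconn.isExactAlliance_univ_of_isRegularOfDegree hreg
    · exact hconn.eq_univ_of_isExactAlliance_maxDegree hS
  · rintro ⟨S, hS⟩
    have hmem : S ∈ {T : Finset V | G.IsExactAlliance T G.maxDegree} := hS ▸ Set.mem_singleton S
    exact hconn.isRegularOfDegree_maxDegree_of_isExactAlliance hmem
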